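/- arXiv:2209.11416 — 2 statements merged into one kernel-verified Lean document; each statement's English description precedes it below -/
import Mathlib

section
/- Assume Φ is a T₀ topological space. The assignments O(((r,s), φ)) ↦ φ for r, s ∈ ℤ; O(((∞,r), φ)) ↦ O₁(φ) for r ∈ ℤ; O(((r,∞), φ)) ↦ O₂(φ) for r ∈ ℤ; and O(((∞,∞), φ)) ↦ O(φ) are well defined and give a bijection from the quasi-orbit space O(Y) of the ℤ²-action on Y onto the disjoint union Φ ⊔ O₁(Φ) ⊔ O₂(Φ) ⊔ O(Φ), where O₁(Φ) and O₂(Φ) are the quasi-orbit spaces of the ℤ-actions on Φ generated by α̇ and α̈ respectively, and O(Φ) is the quasi-orbit space of the full ℤ²-action on Φ. -/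
noncomputable section

/-- The action of the group `ℤ²` on `Y = (ℤ∪{∞}) × (ℤ∪{∞}) × Φ` induced by an action
`σ` of `ℤ²` on `Φ`. -/
def act {Φ : Type*} (σ : ℤ × ℤ → Φ → Φ) (t : ℤ × ℤ) (y : WithTop ℤ × WithTop ℤ × Φ) :
    WithTop ℤ × WithTop ℤ × Φ :=
  (y.1 + (t.1 : ℤ), y.2.1 + (t.2 : ℤ),
    if y.1 = ⊤ then (if y.2.1 = ⊤ then σ t y.2.2 else σ (t.1, 0) y.2.2)
    else (if y.2.1 = ⊤ then σ (0, t.2) y.2.2 else y.2.2))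

/-- The quasi-orbit relation on `Y`: two points are related iff their `ℤ²`-orbit
closures coincide. -/
def qY {Φ : Type*} [TopologicalSpace Φ] [TopologicalSpace (WithTop ℤ)]
    (σ : ℤ × ℤ → Φ → Φ) (y y' : WithTop ℤ × WithTop ℤ × Φ) : Prop :=
  closure (Set.range fun t : ℤ × ℤ => act σ t y) =
    closure (Set.range fun t : ℤ × ℤ => act σ t y')

/-- The quasi-orbit relation on `Φ` for the `ℤ`-action `α̇_m = σ(m,0)`. -/
def q1 {Φ : Type*} [TopologicalSpace Φ] (σ : ℤ × ℤ → Φ → Φ) (φ ψ : Φ) : Prop :=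
  closure (Set.range fun m : ℤ => σ (m, 0) φ) =
    closure (Set.range fun m : ℤ => σ (m, 0) ψ)

/-- The quasi-orbit relation on `Φ` for the `ℤ`-action `α̈_n = σ(0,n)`. -/
def q2 {Φ : Type*} [TopologicalSpace Φ] (σ : ℤ × ℤ → Φ → Φ) (φ ψ : Φ) : Prop :=
  closure (Set.range fun n : ℤ => σ (0, n) φ) =
    closure (Set.range fun n : ℤ => σ (0, n) ψ)

/-- The quasi-orbit relation on `Φ` for the full `ℤ²`-action. -/
def qPhi {Φ : Type*} [TopologicalSpace Φ] (σ : ℤ × ℤ → Φ → Φ) (φ ψ : Φ) : Prop :=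
  closure (Set.range fun t : ℤ × ℤ => σ t φ) =
    closure (Set.range fun t : ℤ × ℤ => σ t ψ)

set_option linter.unusedSectionVars false
set_option maxHeartbeats 1000000

open Filter Topology Set

namespace Stmt14Aux

variable {Φ : Type*} [TopologicalSpace Φ]
variable [TopologicalSpace (WithTop ℤ)] [OrderTopology (WithTop ℤ)]

lemma tendsto_coe_top' : Tendsto (fun m : ℤ => (m : WithTop ℤ)) atTop (𝓝 ⊤) := by
  rw [nhds_top_basis.tendsto_right_iff]
  rintro a ha
  induction a using WithTop.recTopCoe with
  | top => exact absurd ha (lt_irrefl _)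
  | coe n =>
    filter_upwards [Filter.eventually_ge_atTop (n+1)] with m hm
    exact WithTop.coe_lt_coe.2 (by omega)

lemma tendsto_shift (r : ℤ) : Tendsto (fun m : ℤ => ((r + m : ℤ) : WithTop ℤ)) atTop (𝓝 ⊤) :=
  tendsto_coe_top'.comp (Filter.tendsto_atTop_add_const_left _ r tendsto_id)

variable (σ : ℤ × ℤ → Φ → Φ)

lemma act_cc (t : ℤ × ℤ) (r s : ℤ) (φ : Φ) :
    act σ t (↑r, ↑s, φ) = (↑(r+t.1), ↑(s+t.2), φ) := by
  simp [act, WithTop.coe_ne_top, ← WithTop.coe_add]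

lemma act_tc (t : ℤ × ℤ) (s : ℤ) (φ : Φ) :
    act σ t (⊤, ↑s, φ) = (⊤, ↑(s+t.2), σ (t.1, 0) φ) := by
  simp [act, WithTop.coe_ne_top, ← WithTop.coe_add]

lemma act_ct (t : ℤ × ℤ) (r : ℤ) (φ : Φ) :
    act σ t (↑r, ⊤, φ) = (↑(r+t.1), ⊤, σ (0, t.2) φ) := by
  simp [act, WithTop.coe_ne_top, ← WithTop.coe_add]

lemma act_tt (t : ℤ × ℤ) (φ : Φ) :
    act σ t (⊤, ⊤, φ) = (⊤, ⊤, σ t φ) := by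
  simp [act]

lemma fiber_closure {a b : WithTop ℤ} {ψ : Φ} {T : Set Φ}
    {S : Set (WithTop ℤ × WithTop ℤ × Φ)}
    (hT : ∀ χ ∈ T, ((a, b, χ) : WithTop ℤ × WithTop ℤ × Φ) ∈ closure S)
    (hψ : ψ ∈ closure T) :
    ((a, b, ψ) : WithTop ℤ × WithTop ℤ × Φ) ∈ closure S := by
  have hc : Continuous (fun x : Φ => ((a, b, x) : WithTop ℤ × WithTop ℤ × Φ)) :=
    continuous_const.prodMk (continuous_const.prodMk continuous_id)
  have h1 : ((a, b, ψ) : WithTop ℤ × WithTop ℤ × Φ)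
      ∈ closure ((fun x : Φ => ((a, b, x) : WithTop ℤ × WithTop ℤ × Φ)) '' T) :=
    image_closure_subset_closure_image hc ⟨ψ, hψ, rfl⟩
  refine closure_minimal ?_ isClosed_closure h1
  rintro _ ⟨χ, hχ, rfl⟩
  exact hT χ hχ

lemma lemA (r s : ℤ) (φ : Φ) :
    closure (Set.range fun t : ℤ × ℤ => act σ t ((r : WithTop ℤ), (s : WithTop ℤ), φ))
      = (Set.univ ×ˢ (Set.univ ×ˢ closure {φ}) : Set (WithTop ℤ × WithTop ℤ × Φ)) := by
  apply subset_antisymm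
  · apply closure_minimal
    · rintro _ ⟨t, rfl⟩
      simp only [act_cc]
      exact ⟨trivial, trivial, subset_closure rfl⟩
    · exact isClosed_univ.prod (isClosed_univ.prod isClosed_closure)
  · rintro ⟨a, b, ψ⟩ ⟨-, -, hψ⟩
    refine fiber_closure (T := {φ}) ?_ hψ
    rintro χ rfl
    induction a using WithTop.recTopCoe with
    | top =>
      induction b using WithTop.recTopCoe with
      | top =>
        refine mem_closure_of_tendsto (b := atTop) (f := fun m : ℤ => act σ (m, m) (↑r, ↑s, χ)) ?_
          (Eventually.of_forall fun m => ⟨(m, m), rfl⟩)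
        simp only [act_cc]
        exact (tendsto_shift r).prodMk_nhds ((tendsto_shift s).prodMk_nhds tendsto_const_nhds)
      | coe v =>
        refine mem_closure_of_tendsto (b := atTop) (f := fun m : ℤ => act σ (m, v - s) (↑r, ↑s, χ)) ?_
          (Eventually.of_forall fun m => ⟨(m, v - s), rfl⟩)
        simp only [act_cc]
        have hv : s + (v - s) = v := by omega
        rw [hv]
        exact (tendsto_shift r).prodMk_nhds tendsto_const_nhds
    | coe u =>
      induction b using WithTop.recTopCoe with
      | top =>
        refine mem_closure_of_tendsto (b := atTop) (f := fun m : ℤ => act σ (u - r, m) (↑r, ↑s, χ)) ?_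
          (Eventually.of_forall fun m => ⟨(u - r, m), rfl⟩)
        simp only [act_cc]
        have hu : r + (u - r) = u := by omega
        rw [hu]
        exact tendsto_const_nhds.prodMk_nhds ((tendsto_shift s).prodMk_nhds tendsto_const_nhds)
      | coe v =>
        refine subset_closure ⟨(u - r, v - s), ?_⟩
        have h1 : r + (u - r) = u := by omega
        have h2 : s + (v - s) = v := by omega
        simp only [act_cc, h1, h2]

lemma lemB (r : ℤ) (φ : Φ) :
    closure (Set.range fun t : ℤ × ℤ => act σ t ((⊤ : WithTop ℤ), (r : WithTop ℤ), φ))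
      = ({⊤} ×ˢ (Set.univ ×ˢ closure (Set.range fun m : ℤ => σ (m, 0) φ))
          : Set (WithTop ℤ × WithTop ℤ × Φ)) := by
  apply subset_antisymm
  · apply closure_minimal
    · rintro _ ⟨t, rfl⟩
      simp only [act_tc]
      exact ⟨rfl, trivial, subset_closure ⟨t.1, rfl⟩⟩
    · exact isClosed_singleton.prod (isClosed_univ.prod isClosed_closure)
  · rintro ⟨a, b, ψ⟩ ⟨ha, -, hψ⟩
    cases ha
    refine fiber_closure ?_ hψ
    rintro _ ⟨m, rfl⟩
    induction b using WithTop.recTopCoe with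
    | top =>
      refine mem_closure_of_tendsto (b := atTop) (f := fun n : ℤ => act σ (m, n) (⊤, ↑r, φ)) ?_
        (Eventually.of_forall fun n => ⟨(m, n), rfl⟩)
      simp only [act_tc]
      exact tendsto_const_nhds.prodMk_nhds ((tendsto_shift r).prodMk_nhds tendsto_const_nhds)
    | coe v =>
      refine subset_closure ⟨(m, v - r), ?_⟩
      have h1 : r + (v - r) = v := by omega
      simp only [act_tc, h1]
      rfl

lemma lemC (r : ℤ) (φ : Φ) :
    closure (Set.range fun t : ℤ × ℤ => act σ t ((r : WithTop ℤ), (⊤ : WithTop ℤ), φ))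
      = (Set.univ ×ˢ ({⊤} ×ˢ closure (Set.range fun n : ℤ => σ (0, n) φ))
          : Set (WithTop ℤ × WithTop ℤ × Φ)) := by
  apply subset_antisymm
  · apply closure_minimal
    · rintro _ ⟨t, rfl⟩
      simp only [act_ct]
      exact ⟨trivial, rfl, subset_closure ⟨t.2, rfl⟩⟩
    · exact isClosed_univ.prod (isClosed_singleton.prod isClosed_closure)
  · rintro ⟨a, b, ψ⟩ ⟨-, hb, hψ⟩
    cases hb
    refine fiber_closure ?_ hψ
    rintro _ ⟨n, rfl⟩
    induction a using WithTop.recTopCoe with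
    | top =>
      refine mem_closure_of_tendsto (b := atTop) (f := fun m : ℤ => act σ (m, n) (↑r, ⊤, φ)) ?_
        (Eventually.of_forall fun m => ⟨(m, n), rfl⟩)
      simp only [act_ct]
      exact (tendsto_shift r).prodMk_nhds tendsto_const_nhds
    | coe u =>
      refine subset_closure ⟨(u - r, n), ?_⟩
      have h1 : r + (u - r) = u := by omega
      simp only [act_ct, h1]
      rfl

lemma lemD (φ : Φ) :
    closure (Set.range fun t : ℤ × ℤ => act σ t ((⊤ : WithTop ℤ), (⊤ : WithTop ℤ), φ))
      = ({⊤} ×ˢ ({⊤} ×ˢ closure (Set.range fun t : ℤ × ℤ => σ t φ))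
          : Set (WithTop ℤ × WithTop ℤ × Φ)) := by
  apply subset_antisymm
  · apply closure_minimal
    · rintro _ ⟨t, rfl⟩
      simp only [act_tt]
      exact ⟨rfl, rfl, subset_closure ⟨t, rfl⟩⟩
    · exact isClosed_singleton.prod (isClosed_singleton.prod isClosed_closure)
  · rintro ⟨a, b, ψ⟩ ⟨ha, hb, hψ⟩
    cases ha; cases hb
    refine fiber_closure ?_ hψ
    rintro _ ⟨t, rfl⟩
    exact subset_closure ⟨t, act_tt σ t φ⟩

/-- The classifying map on points of `Y`. -/
def fY : WithTop ℤ × WithTop ℤ × Φ → Φ ⊕ (Quot (q1 σ) ⊕ (Quot (q2 σ) ⊕ Quot (qPhi σ))) :=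
  fun y =>
    if y.1 = ⊤ then
      (if y.2.1 = ⊤ then .inr (.inr (.inr (Quot.mk _ y.2.2)))
       else .inr (.inl (Quot.mk _ y.2.2)))
    else
      (if y.2.1 = ⊤ then .inr (.inr (.inl (Quot.mk _ y.2.2))) else .inl y.2.2)

lemma fY_cc (r s : ℤ) (φ : Φ) : fY σ (↑r, ↑s, φ) = .inl φ := by
  simp [fY, WithTop.coe_ne_top]

lemma fY_tc (s : ℤ) (φ : Φ) : fY σ (⊤, ↑s, φ) = .inr (.inl (Quot.mk _ φ)) := by
  simp [fY, WithTop.coe_ne_top]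

lemma fY_ct (r : ℤ) (φ : Φ) : fY σ (↑r, ⊤, φ) = .inr (.inr (.inl (Quot.mk _ φ))) := by
  simp [fY, WithTop.coe_ne_top]

lemma fY_tt (φ : Φ) : fY σ (⊤, ⊤, φ) = .inr (.inr (.inr (Quot.mk _ φ))) := by
  simp [fY]

variable [T0Space Φ]

lemma sound (hσ0 : ∀ φ : Φ, σ 0 φ = φ) :
    ∀ y y', qY σ y y' → fY σ y = fY σ y' := by
  have hC1 : ∀ φ : Φ, φ ∈ closure (Set.range fun m : ℤ => σ (m, 0) φ) :=
    fun φ => subset_closure ⟨0, hσ0 φ⟩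
  have hC2 : ∀ φ : Φ, φ ∈ closure (Set.range fun n : ℤ => σ (0, n) φ) :=
    fun φ => subset_closure ⟨0, hσ0 φ⟩
  rintro ⟨a, b, φ⟩ ⟨a', b', ψ⟩ h
  unfold qY at h
  induction a using WithTop.recTopCoe with
  | top =>
    induction b using WithTop.recTopCoe with
    | top =>
      -- y has shape D
      rw [lemD] at h
      induction a' using WithTop.recTopCoe with
      | top =>
        induction b' using WithTop.recTopCoe with
        | top =>
          rw [lemD] at h
          rw [fY_tt, fY_tt]
          have e : closure (Set.range fun t : ℤ × ℤ => σ t φ)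
              = closure (Set.range fun t : ℤ × ℤ => σ t ψ) := by
            apply Set.eq_of_subset_of_subset <;> intro χ hχ
            · have : ((⊤, ⊤, χ) : WithTop ℤ × WithTop ℤ × Φ)
                  ∈ ({⊤} ×ˢ ({⊤} ×ˢ closure (Set.range fun t : ℤ × ℤ => σ t ψ))
                    : Set (WithTop ℤ × WithTop ℤ × Φ)) := by
                rw [← h]; exact ⟨rfl, rfl, hχ⟩
              exact this.2.2
            · have : ((⊤, ⊤, χ) : WithTop ℤ × WithTop ℤ × Φ)
                  ∈ ({⊤} ×ˢ ({⊤} ×ˢ closure (Set.range fun t : ℤ × ℤ => σ t φ))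
                    : Set (WithTop ℤ × WithTop ℤ × Φ)) := by
                rw [h]; exact ⟨rfl, rfl, hχ⟩
              exact this.2.2
          exact congrArg _ (congrArg _ (congrArg _ (Quot.sound e)))
        | coe s' =>
          rw [lemB] at h
          have : ((⊤, (s' : WithTop ℤ), ψ) : WithTop ℤ × WithTop ℤ × Φ)
              ∈ ({⊤} ×ˢ ({⊤} ×ˢ closure (Set.range fun t : ℤ × ℤ => σ t φ))
                : Set (WithTop ℤ × WithTop ℤ × Φ)) := by
            rw [h]; exact ⟨rfl, trivial, hC1 ψ⟩
          exact absurd this.2.1 (WithTop.coe_ne_top)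
      | coe r' =>
        induction b' using WithTop.recTopCoe with
        | top =>
          rw [lemC] at h
          have : (((r' : WithTop ℤ), ⊤, ψ) : WithTop ℤ × WithTop ℤ × Φ)
              ∈ ({⊤} ×ˢ ({⊤} ×ˢ closure (Set.range fun t : ℤ × ℤ => σ t φ))
                : Set (WithTop ℤ × WithTop ℤ × Φ)) := by
            rw [h]; exact ⟨trivial, rfl, hC2 ψ⟩
          exact absurd this.1 (WithTop.coe_ne_top)
        | coe s' =>
          rw [lemA] at h
          have : (((r' : WithTop ℤ), (s' : WithTop ℤ), ψ) : WithTop ℤ × WithTop ℤ × Φ)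
              ∈ ({⊤} ×ˢ ({⊤} ×ˢ closure (Set.range fun t : ℤ × ℤ => σ t φ))
                : Set (WithTop ℤ × WithTop ℤ × Φ)) := by
            rw [h]; exact ⟨trivial, trivial, subset_closure rfl⟩
          exact absurd this.1 (WithTop.coe_ne_top)
    | coe s =>
      -- y has shape B
      rw [lemB] at h
      induction a' using WithTop.recTopCoe with
      | top =>
        induction b' using WithTop.recTopCoe with
        | top =>
          rw [lemD] at h
          have : ((⊤, (s : WithTop ℤ), φ) : WithTop ℤ × WithTop ℤ × Φ)
              ∈ ({⊤} ×ˢ ({⊤} ×ˢ closure (Set.range fun t : ℤ × ℤ => σ t ψ))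
                : Set (WithTop ℤ × WithTop ℤ × Φ)) := by
            rw [← h]; exact ⟨rfl, trivial, hC1 φ⟩
          exact absurd this.2.1 (WithTop.coe_ne_top)
        | coe s' =>
          rw [lemB] at h
          rw [fY_tc, fY_tc]
          have e : closure (Set.range fun m : ℤ => σ (m, 0) φ)
              = closure (Set.range fun m : ℤ => σ (m, 0) ψ) := by
            apply Set.eq_of_subset_of_subset <;> intro χ hχ
            · have : ((⊤, (s' : WithTop ℤ), χ) : WithTop ℤ × WithTop ℤ × Φ)
                  ∈ ({⊤} ×ˢ (Set.univ ×ˢ closure (Set.range fun m : ℤ => σ (m, 0) ψ))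
                    : Set (WithTop ℤ × WithTop ℤ × Φ)) := by
                rw [← h]; exact ⟨rfl, trivial, hχ⟩
              exact this.2.2
            · have : ((⊤, (s : WithTop ℤ), χ) : WithTop ℤ × WithTop ℤ × Φ)
                  ∈ ({⊤} ×ˢ (Set.univ ×ˢ closure (Set.range fun m : ℤ => σ (m, 0) φ))
                    : Set (WithTop ℤ × WithTop ℤ × Φ)) := by
                rw [h]; exact ⟨rfl, trivial, hχ⟩
              exact this.2.2
          exact congrArg _ (congrArg _ (Quot.sound e))
      | coe r' =>
        induction b' using WithTop.recTopCoe with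
        | top =>
          rw [lemC] at h
          have : ((⊤, (s : WithTop ℤ), φ) : WithTop ℤ × WithTop ℤ × Φ)
              ∈ (Set.univ ×ˢ ({⊤} ×ˢ closure (Set.range fun n : ℤ => σ (0, n) ψ))
                : Set (WithTop ℤ × WithTop ℤ × Φ)) := by
            rw [← h]; exact ⟨rfl, trivial, hC1 φ⟩
          exact absurd this.2.1 (WithTop.coe_ne_top)
        | coe s' =>
          rw [lemA] at h
          have : (((r' : WithTop ℤ), (s' : WithTop ℤ), ψ) : WithTop ℤ × WithTop ℤ × Φ)
              ∈ ({⊤} ×ˢ (Set.univ ×ˢ closure (Set.range fun m : ℤ => σ (m, 0) φ))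
                : Set (WithTop ℤ × WithTop ℤ × Φ)) := by
            rw [h]; exact ⟨trivial, trivial, subset_closure rfl⟩
          exact absurd this.1 (WithTop.coe_ne_top)
  | coe r =>
    induction b using WithTop.recTopCoe with
    | top =>
      -- y has shape C
      rw [lemC] at h
      induction a' using WithTop.recTopCoe with
      | top =>
        induction b' using WithTop.recTopCoe with
        | top =>
          rw [lemD] at h
          have : (((r : WithTop ℤ), ⊤, φ) : WithTop ℤ × WithTop ℤ × Φ)
              ∈ ({⊤} ×ˢ ({⊤} ×ˢ closure (Set.range fun t : ℤ × ℤ => σ t ψ))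
                : Set (WithTop ℤ × WithTop ℤ × Φ)) := by
            rw [← h]; exact ⟨trivial, rfl, hC2 φ⟩
          exact absurd this.1 (WithTop.coe_ne_top)
        | coe s' =>
          rw [lemB] at h
          have : (((r : WithTop ℤ), ⊤, φ) : WithTop ℤ × WithTop ℤ × Φ)
              ∈ ({⊤} ×ˢ (Set.univ ×ˢ closure (Set.range fun m : ℤ => σ (m, 0) ψ))
                : Set (WithTop ℤ × WithTop ℤ × Φ)) := by
            rw [← h]; exact ⟨trivial, rfl, hC2 φ⟩
          exact absurd this.1 (WithTop.coe_ne_top)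
      | coe r' =>
        induction b' using WithTop.recTopCoe with
        | top =>
          rw [lemC] at h
          rw [fY_ct, fY_ct]
          have e : closure (Set.range fun n : ℤ => σ (0, n) φ)
              = closure (Set.range fun n : ℤ => σ (0, n) ψ) := by
            apply Set.eq_of_subset_of_subset <;> intro χ hχ
            · have : (((r' : WithTop ℤ), ⊤, χ) : WithTop ℤ × WithTop ℤ × Φ)
                  ∈ (Set.univ ×ˢ ({⊤} ×ˢ closure (Set.range fun n : ℤ => σ (0, n) ψ))
                    : Set (WithTop ℤ × WithTop ℤ × Φ)) := by
                rw [← h]; exact ⟨trivial, rfl, hχ⟩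
              exact this.2.2
            · have : (((r : WithTop ℤ), ⊤, χ) : WithTop ℤ × WithTop ℤ × Φ)
                  ∈ (Set.univ ×ˢ ({⊤} ×ˢ closure (Set.range fun n : ℤ => σ (0, n) φ))
                    : Set (WithTop ℤ × WithTop ℤ × Φ)) := by
                rw [h]; exact ⟨trivial, rfl, hχ⟩
              exact this.2.2
          exact congrArg _ (congrArg _ (congrArg _ (Quot.sound e)))
        | coe s' =>
          rw [lemA] at h
          have : (((r' : WithTop ℤ), (s' : WithTop ℤ), ψ) : WithTop ℤ × WithTop ℤ × Φ)
              ∈ (Set.univ ×ˢ ({⊤} ×ˢ closure (Set.range fun n : ℤ => σ (0, n) φ))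
                : Set (WithTop ℤ × WithTop ℤ × Φ)) := by
            rw [h]; exact ⟨trivial, trivial, subset_closure rfl⟩
          exact absurd this.2.1 (WithTop.coe_ne_top)
    | coe s =>
      -- y has shape A
      rw [lemA] at h
      induction a' using WithTop.recTopCoe with
      | top =>
        induction b' using WithTop.recTopCoe with
        | top =>
          rw [lemD] at h
          have : (((r : WithTop ℤ), (s : WithTop ℤ), φ) : WithTop ℤ × WithTop ℤ × Φ)
              ∈ ({⊤} ×ˢ ({⊤} ×ˢ closure (Set.range fun t : ℤ × ℤ => σ t ψ))
                : Set (WithTop ℤ × WithTop ℤ × Φ)) := by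
            rw [← h]; exact ⟨trivial, trivial, subset_closure rfl⟩
          exact absurd this.1 (WithTop.coe_ne_top)
        | coe s' =>
          rw [lemB] at h
          have : (((r : WithTop ℤ), (s : WithTop ℤ), φ) : WithTop ℤ × WithTop ℤ × Φ)
              ∈ ({⊤} ×ˢ (Set.univ ×ˢ closure (Set.range fun m : ℤ => σ (m, 0) ψ))
                : Set (WithTop ℤ × WithTop ℤ × Φ)) := by
            rw [← h]; exact ⟨trivial, trivial, subset_closure rfl⟩
          exact absurd this.1 (WithTop.coe_ne_top)
      | coe r' =>
        induction b' using WithTop.recTopCoe with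
        | top =>
          rw [lemC] at h
          have : (((r : WithTop ℤ), (s : WithTop ℤ), φ) : WithTop ℤ × WithTop ℤ × Φ)
              ∈ (Set.univ ×ˢ ({⊤} ×ˢ closure (Set.range fun n : ℤ => σ (0, n) ψ))
                : Set (WithTop ℤ × WithTop ℤ × Φ)) := by
            rw [← h]; exact ⟨trivial, trivial, subset_closure rfl⟩
          exact absurd this.2.1 (WithTop.coe_ne_top)
        | coe s' =>
          rw [lemA] at h
          rw [fY_cc, fY_cc]
          have h1 : φ ∈ closure {ψ} := by
            have : (((r : WithTop ℤ), (s : WithTop ℤ), φ) : WithTop ℤ × WithTop ℤ × Φ)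
                ∈ (Set.univ ×ˢ (Set.univ ×ˢ closure {ψ})
                  : Set (WithTop ℤ × WithTop ℤ × Φ)) := by
              rw [← h]; exact ⟨trivial, trivial, subset_closure rfl⟩
            exact this.2.2
          have h2 : ψ ∈ closure {φ} := by
            have : (((r' : WithTop ℤ), (s' : WithTop ℤ), ψ) : WithTop ℤ × WithTop ℤ × Φ)
                ∈ (Set.univ ×ˢ (Set.univ ×ˢ closure {φ})
                  : Set (WithTop ℤ × WithTop ℤ × Φ)) := by
              rw [h]; exact ⟨trivial, trivial, subset_closure rfl⟩
            exact this.2.2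
          have : ψ = φ :=
        ((specializes_iff_mem_closure.2 h1).antisymm (specializes_iff_mem_closure.2 h2)).eq
          rw [this]

lemma eqv1 : Equivalence (q1 σ) := ⟨fun _ => rfl, Eq.symm, Eq.trans⟩
lemma eqv2 : Equivalence (q2 σ) := ⟨fun _ => rfl, Eq.symm, Eq.trans⟩
lemma eqvPhi : Equivalence (qPhi σ) := ⟨fun _ => rfl, Eq.symm, Eq.trans⟩

lemma complete : ∀ y y', fY σ y = fY σ y' → qY σ y y' := by
  rintro ⟨a, b, φ⟩ ⟨a', b', ψ⟩ h
  unfold qY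
  induction a using WithTop.recTopCoe with
  | top =>
    induction b using WithTop.recTopCoe with
    | top =>
      induction a' using WithTop.recTopCoe with
      | top =>
        induction b' using WithTop.recTopCoe with
        | top =>
          rw [fY_tt, fY_tt] at h
          simp only [Sum.inr.injEq] at h
          have e : qPhi σ φ ψ := ((eqvPhi σ).eqvGen_iff).1 (Quot.eq.1 h)
          rw [lemD, lemD, e]
        | coe s' => rw [fY_tt, fY_tc] at h; simp at h
      | coe r' =>
        induction b' using WithTop.recTopCoe with
        | top => rw [fY_tt, fY_ct] at h; simp at h
        | coe s' => rw [fY_tt, fY_cc] at h; simp at h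
    | coe s =>
      induction a' using WithTop.recTopCoe with
      | top =>
        induction b' using WithTop.recTopCoe with
        | top => rw [fY_tc, fY_tt] at h; simp at h
        | coe s' =>
          rw [fY_tc, fY_tc] at h
          simp only [Sum.inr.injEq, Sum.inl.injEq] at h
          have e : q1 σ φ ψ := ((eqv1 σ).eqvGen_iff).1 (Quot.eq.1 h)
          rw [lemB, lemB, e]
      | coe r' =>
        induction b' using WithTop.recTopCoe with
        | top => rw [fY_tc, fY_ct] at h; simp at h
        | coe s' => rw [fY_tc, fY_cc] at h; simp at h
  | coe r =>
    induction b using WithTop.recTopCoe with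
    | top =>
      induction a' using WithTop.recTopCoe with
      | top =>
        induction b' using WithTop.recTopCoe with
        | top => rw [fY_ct, fY_tt] at h; simp at h
        | coe s' => rw [fY_ct, fY_tc] at h; simp at h
      | coe r' =>
        induction b' using WithTop.recTopCoe with
        | top =>
          rw [fY_ct, fY_ct] at h
          simp only [Sum.inr.injEq, Sum.inl.injEq] at h
          have e : q2 σ φ ψ := ((eqv2 σ).eqvGen_iff).1 (Quot.eq.1 h)
          rw [lemC, lemC, e]
        | coe s' => rw [fY_ct, fY_cc] at h; simp at h
    | coe s =>
      induction a' using WithTop.recTopCoe with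
      | top =>
        induction b' using WithTop.recTopCoe with
        | top => rw [fY_cc, fY_tt] at h; simp at h
        | coe s' => rw [fY_cc, fY_tc] at h; simp at h
      | coe r' =>
        induction b' using WithTop.recTopCoe with
        | top => rw [fY_cc, fY_ct] at h; simp at h
        | coe s' =>
          rw [fY_cc, fY_cc] at h
          simp only [Sum.inl.injEq] at h
          rw [lemA, lemA, h]

end Stmt14Aux

/-- For `Φ` a `T₀`-space, the assignments `O((r,s),φ) ↦ φ`,
`O((∞,r),φ) ↦ O₁(φ)`, `O((r,∞),φ) ↦ O₂(φ)` and `O((∞,∞),φ) ↦ O(φ)` are well defined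
and give a bijection of the quasi-orbit space `O(Y)` onto the disjoint union
`Φ ⊔ O₁(Φ) ⊔ O₂(Φ) ⊔ O(Φ)`. -/
theorem stmt14 {Φ : Type*} [TopologicalSpace Φ] [T0Space Φ]
    [TopologicalSpace (WithTop ℤ)] [OrderTopology (WithTop ℤ)]
    (σ : ℤ × ℤ → Φ → Φ)
    (hσ0 : ∀ φ : Φ, σ 0 φ = φ)
    (hσadd : ∀ s t : ℤ × ℤ, ∀ φ : Φ, σ (s + t) φ = σ s (σ t φ))
    (hσcont : ∀ t : ℤ × ℤ, Continuous (σ t)) :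
    ∃ F : Quot (qY σ) → Φ ⊕ (Quot (q1 σ) ⊕ (Quot (q2 σ) ⊕ Quot (qPhi σ))),
      (∀ (r s : ℤ) (φ : Φ),
        F (Quot.mk _ ((r : WithTop ℤ), (s : WithTop ℤ), φ)) = Sum.inl φ) ∧
      (∀ (r : ℤ) (φ : Φ),
        F (Quot.mk _ ((⊤ : WithTop ℤ), (r : WithTop ℤ), φ))
          = Sum.inr (Sum.inl (Quot.mk _ φ))) ∧
      (∀ (r : ℤ) (φ : Φ),
        F (Quot.mk _ ((r : WithTop ℤ), (⊤ : WithTop ℤ), φ))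
          = Sum.inr (Sum.inr (Sum.inl (Quot.mk _ φ)))) ∧
      (∀ φ : Φ,
        F (Quot.mk _ ((⊤ : WithTop ℤ), (⊤ : WithTop ℤ), φ))
          = Sum.inr (Sum.inr (Sum.inr (Quot.mk _ φ)))) ∧
      Function.Bijective F := by
  classical
  refine ⟨Quot.lift (Stmt14Aux.fY σ) (Stmt14Aux.sound σ hσ0),
    fun r s φ => Stmt14Aux.fY_cc σ r s φ,
    fun r φ => Stmt14Aux.fY_tc σ r φ,
    fun r φ => Stmt14Aux.fY_ct σ r φ,
    fun φ => Stmt14Aux.fY_tt σ φ, ?_, ?_⟩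
  · intro x y
    induction x using Quot.ind with | _ a => ?_
    induction y using Quot.ind with | _ b => ?_
    intro h
    exact Quot.sound (Stmt14Aux.complete σ a b h)
  · rintro (φ | q | q | q)
    · exact ⟨Quot.mk _ (((0:ℤ) : WithTop ℤ), ((0:ℤ) : WithTop ℤ), φ), Stmt14Aux.fY_cc σ 0 0 φ⟩
    · obtain ⟨φ, rfl⟩ := Quot.exists_rep q
      exact ⟨Quot.mk _ ((⊤ : WithTop ℤ), ((0:ℤ) : WithTop ℤ), φ), Stmt14Aux.fY_tc σ 0 φ⟩
    · obtain ⟨φ, rfl⟩ := Quot.exists_rep q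
      exact ⟨Quot.mk _ (((0:ℤ) : WithTop ℤ), (⊤ : WithTop ℤ), φ), Stmt14Aux.fY_ct σ 0 φ⟩
    · obtain ⟨φ, rfl⟩ := Quot.exists_rep q
      exact ⟨Quot.mk _ ((⊤ : WithTop ℤ), (⊤ : WithTop ℤ), φ), Stmt14Aux.fY_tt σ φ⟩
end
end

section
/- Suppose A ≠ 0 and π is a faithful, nonzero, irreducible, nondegenerate representation of A on H (so that A is primitive). Then the C*-algebra C is primitive: its identity representation on ℓ²(ℕ², H) is a faithful nonzero irreducible representation. (This is the concrete form of the converse direction of the theorem that A ×^piso_α ℕ² is primitive if and only if A is primitive.) -/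
open scoped ENNReal

noncomputable section

private lemma prod_add_eq_iff' {s t u : ℕ × ℕ} (h : t ≤ u) : s + t = u ↔ s = u - t := by
  obtain ⟨s1,s2⟩ := s; obtain ⟨t1,t2⟩ := t; obtain ⟨u1,u2⟩ := u
  obtain ⟨h1,h2⟩ := Prod.mk_le_mk.mp h
  simp only [Prod.mk_add_mk, Prod.mk_sub_mk, Prod.mk.injEq]
  omega

private lemma prod_sub_add_cancel' {t u : ℕ × ℕ} (h : t ≤ u) : u - t + t = u := by
  obtain ⟨t1,t2⟩ := t; obtain ⟨u1,u2⟩ := u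
  obtain ⟨h1,h2⟩ := Prod.mk_le_mk.mp h
  simp only [Prod.mk_add_mk, Prod.mk_sub_mk, Prod.mk.injEq]
  omega

private lemma prod_le_of_add_eq' {s t u : ℕ × ℕ} (h : s + t = u) : t ≤ u := by
  obtain ⟨s1,s2⟩ := s; obtain ⟨t1,t2⟩ := t; obtain ⟨u1,u2⟩ := u
  simp only [Prod.mk_add_mk, Prod.mk.injEq] at h
  obtain ⟨h1, h2⟩ := h
  refine Prod.mk_le_mk.mpr ⟨?_, ?_⟩ <;> omega

private lemma prod_sub_ne_zero' {t u : ℕ × ℕ} (h : t ≤ u) (hne : u ≠ t) :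
    (1,0) ≤ u - t ∨ (0,1) ≤ u - t := by
  obtain ⟨t1,t2⟩ := t; obtain ⟨u1,u2⟩ := u
  obtain ⟨h1,h2⟩ := Prod.mk_le_mk.mp h
  rw [Ne, Prod.mk.injEq, not_and_or] at hne
  simp only [Prod.mk_sub_mk, Prod.mk_le_mk]
  omega

set_option maxHeartbeats 1000000 in
/-- If `A ≠ 0` and `π` is a faithful, nonzero, irreducible,
nondegenerate representation of `A` on `H` (so `A` is primitive), then the concrete
partial-isometric crossed product `C ⊆ B(ℓ²(ℕ², H))` is primitive: its identity
representation is a faithful nonzero irreducible representation; i.e. `C` contains a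
nonzero operator and every nonzero vector of `ℓ²(ℕ², H)` is cyclic for `C` (equivalently,
the only closed `C`-invariant subspaces are trivial). -/
theorem stmt16
    {A : Type*} [NonUnitalNormedRing A] [StarRing A] [CStarRing A]
    [NormedSpace ℂ A] [IsScalarTower ℂ A A] [SMulCommClass ℂ A A] [StarModule ℂ A]
    [CompleteSpace A]
    {H : Type*} [NormedAddCommGroup H] [InnerProductSpace ℂ H] [CompleteSpace H]
    (α : ℕ × ℕ → (A ≃⋆ₐ[ℂ] A))
    (hα0 : ∀ a : A, α 0 a = a)
    (hαadd : ∀ s t : ℕ × ℕ, ∀ a : A, α (s + t) a = α s (α t a))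
    (π : A →⋆ₙₐ[ℂ] (H →L[ℂ] H))
    -- `A` is nonzero:
    (hA : ∃ a : A, a ≠ 0)
    -- `π` is faithful and nonzero:
    (hπinj : Function.Injective π)
    (hπne : π ≠ 0)
    -- `π` is nondegenerate:
    (hπnd : Dense (↑(Submodule.span ℂ {x : H | ∃ (a : A) (h : H), π a h = x}) : Set H))
    -- `π` is irreducible:
    (hπirr : ∀ K : Submodule ℂ H, IsClosed (K : Set H) →
      (∀ (a : A), ∀ h ∈ K, π a h ∈ K) → K = ⊥ ∨ K = ⊤)
    (πt : A → (lp (fun _ : ℕ × ℕ => H) 2 →L[ℂ] lp (fun _ : ℕ × ℕ => H) 2))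
    (V : ℕ × ℕ → (lp (fun _ : ℕ × ℕ => H) 2 →L[ℂ] lp (fun _ : ℕ × ℕ => H) 2))
    (hπt : ∀ (a : A) (f : lp (fun _ : ℕ × ℕ => H) 2) (s : ℕ × ℕ),
      (πt a f) s = π (α s a) (f s))
    (hV : ∀ (t : ℕ × ℕ) (f : lp (fun _ : ℕ × ℕ => H) 2) (s : ℕ × ℕ),
      (V t f) s = f (s + t))
    (C : StarSubalgebra ℂ (lp (fun _ : ℕ × ℕ => H) 2 →L[ℂ] lp (fun _ : ℕ × ℕ => H) 2))
    (hC : C = (StarAlgebra.adjoin ℂ (Set.range πt ∪ Set.range V)).topologicalClosure) :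
    -- the identity representation of `C` is nonzero,
    (∃ X ∈ C, X ≠ (0 : lp (fun _ : ℕ × ℕ => H) 2 →L[ℂ] lp (fun _ : ℕ × ℕ => H) 2)) ∧
    -- irreducible: every nonzero vector is cyclic,
    (∀ f : lp (fun _ : ℕ × ℕ => H) 2, f ≠ 0 →
      closure {g : lp (fun _ : ℕ × ℕ => H) 2 | ∃ X ∈ C, X f = g} = Set.univ) ∧
    -- equivalently, the only closed invariant subspaces are trivial:
    (∀ K : Submodule ℂ (lp (fun _ : ℕ × ℕ => H) 2),
      IsClosed (K : Set (lp (fun _ : ℕ × ℕ => H) 2)) →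
      (∀ X ∈ C, ∀ f ∈ K, X f ∈ K) → K = ⊥ ∨ K = ⊤) := by
  have hVC : ∀ t, V t ∈ C := fun t => by
    rw [hC]
    exact (StarAlgebra.adjoin ℂ _).le_topologicalClosure
      (StarAlgebra.subset_adjoin ℂ _ (Or.inr ⟨t, rfl⟩))
  have hπC : ∀ a, πt a ∈ C := fun a => by
    rw [hC]
    exact (StarAlgebra.adjoin ℂ _).le_topologicalClosure
      (StarAlgebra.subset_adjoin ℂ _ (Or.inl ⟨a, rfl⟩))
  -- coordinates of `V t` applied to a "single" vector
  have hVsingle : ∀ (t u : ℕ × ℕ) (v : H),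
      V t (lp.single 2 u v) = if t ≤ u then lp.single 2 (u - t) v else 0 := by
    intro t u v
    by_cases h : t ≤ u
    · rw [if_pos h]
      apply lp.ext; funext s
      rw [hV]
      by_cases hs : s = u - t
      · subst hs
        rw [show u - t + t = u from prod_sub_add_cancel' h, lp.single_apply_self,
          lp.single_apply_self]
      · rw [lp.single_apply_ne _ _ _ (fun hc => hs ((prod_add_eq_iff' h).mp hc)),
          lp.single_apply_ne _ _ _ hs]
    · rw [if_neg h]
      apply lp.ext; funext s
      rw [hV, lp.coeFn_zero, Pi.zero_apply,
        lp.single_apply_ne _ _ _ (fun hc => h (prod_le_of_add_eq' hc))]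
  -- coordinates of the adjoint of `V t`
  have hVadj : ∀ (t : ℕ × ℕ) (g : lp (fun _ : ℕ × ℕ => H) 2) (u : ℕ × ℕ),
      (star (V t) g) u = if t ≤ u then g (u - t) else 0 := by
    intro t g u
    apply ext_inner_left ℂ
    intro v
    refine Eq.trans (lp.inner_single_left u v ((star (V t)) g)).symm ?_
    rw [ContinuousLinearMap.star_eq_adjoint (V t),
      ContinuousLinearMap.adjoint_inner_right (V t) (lp.single 2 u v) g, hVsingle]
    by_cases h : t ≤ u
    · rw [if_pos h, if_pos h]
      exact lp.inner_single_left (𝕜 := ℂ) (u - t) v g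
    · rw [if_neg h, if_neg h, inner_zero_left, inner_zero_right]
  -- coordinates of `1 - V t * V t`-type projections
  have hQ : ∀ (t : ℕ × ℕ) (g : lp (fun _ : ℕ × ℕ => H) 2) (u : ℕ × ℕ),
      ((1 - star (V t) * V t) g) u = if t ≤ u then 0 else g u := by
    intro t g u
    have h1 : (1 - star (V t) * V t) g = g - star (V t) (V t g) := by
      simp [ContinuousLinearMap.sub_apply, ContinuousLinearMap.mul_apply]
    rw [h1, lp.coeFn_sub, Pi.sub_apply, hVadj]
    by_cases h : t ≤ u
    · rw [if_pos h, if_pos h, hV, prod_sub_add_cancel' h, sub_self]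
    · rw [if_neg h, if_neg h, sub_zero]
  -- the key "matrix unit" operators in `C`
  have keylem : ∀ (f : lp (fun _ : ℕ × ℕ => H) 2) (t t' : ℕ × ℕ) (a : A),
      ∃ X ∈ C, X f = lp.single 2 t (π (α t a) (f t')) := by
    intro f t t' a
    refine ⟨πt a * (star (V t) * ((1 - star (V (1,0)) * V (1,0)) *
        ((1 - star (V (0,1)) * V (0,1)) * V t'))), ?_, ?_⟩
    · exact mul_mem (hπC a) (mul_mem (star_mem (hVC t))
        (mul_mem (sub_mem (one_mem _) (mul_mem (star_mem (hVC (1,0))) (hVC (1,0))))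
          (mul_mem (sub_mem (one_mem _) (mul_mem (star_mem (hVC (0,1))) (hVC (0,1))))
            (hVC t'))))
    · have e1 : (πt a * (star (V t) * ((1 - star (V (1,0)) * V (1,0)) *
          ((1 - star (V (0,1)) * V (0,1)) * V t')))) f
          = πt a (star (V t) ((1 - star (V (1,0)) * V (1,0))
              ((1 - star (V (0,1)) * V (0,1)) (V t' f)))) := rfl
      -- value of the inner part at a coordinate w
      have hinner : ∀ w : ℕ × ℕ,
          ((1 - star (V (1,0)) * V (1,0)) ((1 - star (V (0,1)) * V (0,1)) (V t' f))) w
            = if w = 0 then f t' else 0 := by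
        intro w
        rw [hQ]
        by_cases h1 : (1,0) ≤ w
        · rw [if_pos h1, if_neg (by
            rintro rfl
            exact absurd (Prod.mk_le_mk.mp h1).1 (by omega))]
        · rw [if_neg h1, hQ]
          by_cases h2 : (0,1) ≤ w
          · rw [if_pos h2, if_neg (by
              rintro rfl
              exact absurd (Prod.mk_le_mk.mp h2).2 (by omega))]
          · rw [if_neg h2, hV]
            have hw : w = 0 := by
              obtain ⟨w1, w2⟩ := w
              simp only [Prod.mk_le_mk, not_and_or, not_le] at h1 h2
              simp only [Prod.mk_eq_zero]
              omega
            rw [if_pos hw, hw, zero_add]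
      rw [e1]
      apply lp.ext; funext u
      rw [hπt, hVadj]
      by_cases h : u = t
      · subst h
        rw [if_pos le_rfl, hinner, if_pos (by
            obtain ⟨u1, u2⟩ := u
            simp only [Prod.mk_sub_mk, Prod.mk_eq_zero]
            omega),
          lp.single_apply_self]
      · rw [lp.single_apply_ne _ _ _ h]
        by_cases hle : t ≤ u
        · rw [if_pos hle, hinner, if_neg (by
            intro hc
            rcases prod_sub_ne_zero' hle h with h' | h' <;>
              · rw [hc] at h'
                exact absurd (Prod.mk_le_mk.mp h') (by simp)), map_zero]
        · rw [if_neg hle, map_zero]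
  -- density of `π(A)h` for `h ≠ 0`
  have hdense : ∀ h0 : H, h0 ≠ 0 → Dense {x : H | ∃ b : A, π b h0 = x} := by
    intro h0 hh0
    set Km : Submodule ℂ H :=
      { carrier := {x | ∃ b : A, π b h0 = x}
        add_mem' := by
          rintro x y ⟨b, rfl⟩ ⟨c, rfl⟩
          exact ⟨b + c, by simp [map_add]⟩
        zero_mem' := ⟨0, by simp [map_zero]⟩
        smul_mem' := by
          rintro c x ⟨b, rfl⟩
          exact ⟨c • b, by simp [map_smul]⟩ } with hKm
    have hinv : ∀ (a : A), ∀ x ∈ Km.topologicalClosure, π a x ∈ Km.topologicalClosure := by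
      intro a x hx
      have hx' : x ∈ closure (Km : Set H) := by
        rw [← Submodule.topologicalClosure_coe]; exact hx
      have : π a x ∈ closure (Km : Set H) :=
        map_mem_closure (π a).continuous hx' (by
          rintro y ⟨b, rfl⟩
          exact ⟨a * b, by simp [map_mul]⟩)
      rw [← Submodule.topologicalClosure_coe] at this
      exact this
    rcases hπirr Km.topologicalClosure Km.isClosed_topologicalClosure hinv with h | h
    · exfalso
      have hzero : ∀ b : A, π b h0 = 0 := by
        intro b
        have hmem : π b h0 ∈ Km.topologicalClosure :=
          Km.le_topologicalClosure ⟨b, rfl⟩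
        rw [h] at hmem
        exact (Submodule.mem_bot ℂ).mp hmem
      apply hh0
      -- h0 is orthogonal to the dense nondegeneracy subspace
      set W : Submodule ℂ H :=
        { carrier := {x | inner (𝕜 := ℂ) x h0 = 0}
          add_mem' := by
            intro x y hx hy
            simp only [Set.mem_setOf_eq] at *
            rw [inner_add_left, hx, hy, add_zero]
          zero_mem' := by simp
          smul_mem' := by
            intro c x hx
            simp only [Set.mem_setOf_eq] at *
            rw [inner_smul_left, hx, mul_zero] } with hW
      have hWclosed : IsClosed (W : Set H) := by
        have : (W : Set H) = (fun x => inner (𝕜 := ℂ) x h0) ⁻¹' {0} := rfl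
        rw [this]
        exact isClosed_singleton.preimage (Continuous.inner continuous_id continuous_const)
      have hle : Submodule.span ℂ {x : H | ∃ (a : A) (v : H), π a v = x} ≤ W := by
        apply Submodule.span_le.mpr
        rintro x ⟨a, v, rfl⟩
        show inner (𝕜 := ℂ) (π a v) h0 = 0
        rw [← ContinuousLinearMap.adjoint_inner_right, ← ContinuousLinearMap.star_eq_adjoint,
          ← map_star π, hzero, inner_zero_right]
      have huniv : (Set.univ : Set H) ⊆ (W : Set H) := by
        rw [← hπnd.closure_eq]
        exact closure_minimal hle hWclosed
      have : inner (𝕜 := ℂ) h0 h0 = 0 := huniv (Set.mem_univ h0)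
      exact inner_self_eq_zero.mp this
    · exact Submodule.dense_iff_topologicalClosure_eq_top.mpr h
  -- main cyclicity statement
  have main : ∀ f : lp (fun _ : ℕ × ℕ => H) 2, f ≠ 0 →
      closure {g : lp (fun _ : ℕ × ℕ => H) 2 | ∃ X ∈ C, X f = g} = Set.univ := by
    intro f hf
    obtain ⟨t', ht'⟩ : ∃ t', f t' ≠ 0 := by
      by_contra hcon
      push_neg at hcon
      exact hf (lp.ext (funext fun s => by simpa using hcon s))
    set S := {g : lp (fun _ : ℕ × ℕ => H) 2 | ∃ X ∈ C, X f = g} with hS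
    set Ssub : Submodule ℂ (lp (fun _ : ℕ × ℕ => H) 2) :=
      { carrier := S
        add_mem' := by
          rintro x y ⟨X, hX, rfl⟩ ⟨Y, hY, rfl⟩
          exact ⟨X + Y, add_mem hX hY, rfl⟩
        zero_mem' := ⟨0, zero_mem _, by simp⟩
        smul_mem' := by
          rintro c x ⟨X, hX, rfl⟩
          exact ⟨c • X, SMulMemClass.smul_mem c hX, rfl⟩ } with hSsub
    have hsingle_mem : ∀ (t : ℕ × ℕ) (w : H), lp.single 2 t w ∈ closure S := by
      intro t w
      have hw : w ∈ closure {x : H | ∃ b : A, π b (f t') = x} := by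
        rw [(hdense _ ht').closure_eq]
        trivial
      rcases mem_closure_iff_seq_limit.mp hw with ⟨x, hxmem, hxlim⟩
      have hsingle_sub : ∀ (a b : H),
          lp.single (E := fun _ : ℕ × ℕ => H) 2 t a - lp.single 2 t b
            = lp.single 2 t (a - b) := by
        intro a b
        apply lp.ext; funext s
        rw [lp.coeFn_sub, Pi.sub_apply]
        by_cases hst : s = t
        · subst hst; rw [lp.single_apply_self, lp.single_apply_self, lp.single_apply_self]
        · rw [lp.single_apply_ne _ _ _ hst, lp.single_apply_ne _ _ _ hst,
            lp.single_apply_ne _ _ _ hst, sub_zero]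
      have hiso : Isometry (fun v : H => lp.single (E := fun _ : ℕ × ℕ => H) 2 t v) := by
        apply Isometry.of_dist_eq
        intro a b
        rw [dist_eq_norm, dist_eq_norm, hsingle_sub a b,
          lp.norm_single (E := fun _ : ℕ × ℕ => H) (p := 2) (by norm_num) t (a - b)]
      apply mem_closure_of_tendsto ((hiso.continuous.tendsto w).comp hxlim)
      · apply Filter.Eventually.of_forall
        intro n
        obtain ⟨b, hb⟩ := hxmem n
        obtain ⟨X, hX, hXf⟩ := keylem f t t' ((α t).symm b)
        refine ⟨X, hX, ?_⟩
        rw [hXf, StarAlgEquiv.apply_symm_apply, hb]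
        rfl
    apply Set.eq_univ_of_forall
    intro g
    have hcoeS : (Ssub : Set (lp (fun _ : ℕ × ℕ => H) 2)) = S := rfl
    have hcoe : (Ssub.topologicalClosure : Set (lp (fun _ : ℕ × ℕ => H) 2)) = closure S := by
      rw [Submodule.topologicalClosure_coe, hcoeS]
    have hsums : ∀ F : Finset (ℕ × ℕ),
        (∑ i ∈ F, lp.single 2 i (g i)) ∈ Ssub.topologicalClosure := by
      intro F
      refine sum_mem fun i _ => ?_
      have h2 : lp.single 2 i (g i) ∈ (Ssub.topologicalClosure :
          Set (lp (fun _ : ℕ × ℕ => H) 2)) := by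
        rw [hcoe]; exact hsingle_mem i (g i)
      exact h2
    have hg : g ∈ (Ssub.topologicalClosure : Set (lp (fun _ : ℕ × ℕ => H) 2)) :=
      Ssub.isClosed_topologicalClosure.mem_of_tendsto (lp.hasSum_single ENNReal.ofNat_ne_top g)
        (Filter.Eventually.of_forall hsums)
    rw [hcoe] at hg
    exact hg
  refine ⟨?_, main, ?_⟩
  · -- a nonzero element of C
    obtain ⟨a0, ha0⟩ : ∃ a : A, π a ≠ 0 := by
      by_contra hcon
      push_neg at hcon
      exact hπne (DFunLike.ext _ _ fun a => by simp [hcon a])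
    obtain ⟨w0, hw0⟩ : ∃ w : H, π a0 w ≠ 0 := by
      by_contra hcon
      push_neg at hcon
      exact ha0 (ContinuousLinearMap.ext fun w => by simp [hcon w])
    refine ⟨πt a0, hπC a0, ?_⟩
    intro hzero
    apply hw0
    have h1 := congrArg (fun X : lp (fun _ : ℕ × ℕ => H) 2 →L[ℂ] lp (fun _ : ℕ × ℕ => H) 2 =>
      (X (lp.single 2 (0 : ℕ × ℕ) w0)) (0 : ℕ × ℕ)) hzero
    simp only at h1
    rw [hπt, hα0, lp.single_apply_self, ContinuousLinearMap.zero_apply, lp.coeFn_zero,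
      Pi.zero_apply] at h1
    exact h1
  · -- closed invariant subspaces are trivial
    intro K hKclosed hKinv
    rcases eq_or_ne K ⊥ with h | h
    · exact Or.inl h
    · right
      obtain ⟨f, hfK, hf⟩ := (Submodule.ne_bot_iff K).mp h
      have hsub : {g : lp (fun _ : ℕ × ℕ => H) 2 | ∃ X ∈ C, X f = g} ⊆ (K : Set _) := by
        rintro g ⟨X, hX, rfl⟩
        exact hKinv X hX f hfK
      have huniv : (Set.univ : Set (lp (fun _ : ℕ × ℕ => H) 2)) ⊆ (K : Set _) := by
        rw [← main f hf]
        exact closure_minimal hsub hKclosed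
      exact Submodule.eq_top_iff'.mpr fun x => huniv (Set.mem_univ x)
end
end
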